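/- Let Q ∈ ℝ^{n×n} and suppose X ∈ ℝ^{n×n} is symmetric positive definite and satisfies the Lyapunov equation XQ + QᵀX = −I. Then for all t ≥ 0, ‖exp(Qt)‖ ≤ √(2‖X⁻¹‖·‖X‖) · exp(−t/(2‖X‖)), where ‖·‖ is the operator 2-norm. -/

import Mathlib

/-!
Along a trajectory `u t = exp (t Q) x`, the Lyapunov function `V = ⟪X u, u⟫` satisfies
`V' = ⟪(XQ + QᵀX) u, u⟫ = -‖u‖²`. Since `V ≤ ‖X‖ ‖u‖²`, this gives `V' ≤ -V / ‖X‖`, so by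
Grönwall `V t ≤ e^{-t/‖X‖} V 0 ≤ e^{-t/‖X‖} ‖X‖ ‖x‖²`. Cauchy–Schwarz for the form `⟪X ·, ·⟫`
applied to `u` and `X⁻¹ u` gives `‖u‖² ≤ ‖X⁻¹‖ V`, whence
`‖u t‖² ≤ ‖X⁻¹‖ ‖X‖ e^{-t/‖X‖} ‖x‖²`.
-/

open Matrix
open scoped Matrix.Norms.L2Operator
open NormedSpace
open scoped RealInnerProductSpace

theorem le_mul_exp_of_hasDerivAt_le_mul {f f' : ℝ → ℝ} {K : ℝ}
    (hf : ∀ s, HasDerivAt f (f' s) s) (hbound : ∀ s, f' s ≤ K * f s) {t : ℝ} (ht : 0 ≤ t) :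
    f t ≤ f 0 * Real.exp (K * t) := by
  have := le_gronwallBound_of_liminf_deriv_right_le (f' := f') (ε := 0) (a := 0) (b := t)
    (fun s _ => (hf s).continuousAt.continuousWithinAt)
    (fun s _ r hr => by
      simpa [slope_def_field, div_eq_inv_mul] using
        (hf s).hasDerivWithinAt.liminf_right_slope_le hr)
    le_rfl (fun s _ => by simpa using hbound s) t ⟨ht, le_rfl⟩
  rwa [gronwallBound_ε0, sub_zero] at this

namespace ContinuousLinearMap

variable {E : Type*} [NormedAddCommGroup E] [InnerProductSpace ℝ E]

theorem inner_apply_self_le_opNorm_mul_sq (P : E →L[ℝ] E) (y : E) :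
    ⟪P y, y⟫ ≤ ‖P‖ * ‖y‖ ^ 2 :=
  calc ⟪P y, y⟫ ≤ ‖P y‖ * ‖y‖ := real_inner_le_norm _ _
    _ ≤ ‖P‖ * ‖y‖ * ‖y‖ := by gcongr; exact P.le_opNorm y
    _ = ‖P‖ * ‖y‖ ^ 2 := by ring

theorem IsPositive.inner_sq_le {P : E →L[ℝ] E} (hP : P.IsPositive) (x y : E) :
    ⟪P x, y⟫ ^ 2 ≤ ⟪P x, x⟫ * ⟪P y, y⟫ := by
  have hquad : ∀ r : ℝ, 0 ≤ ⟪P y, y⟫ * (r * r) + 2 * ⟪P x, y⟫ * r + ⟪P x, x⟫ := by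
    intro r
    have hsymm : ⟪P y, x⟫ = ⟪P x, y⟫ := by
      rw [hP.isSymmetric.apply_clm, real_inner_comm]
    have := hP.inner_nonneg_left (x + r • y)
    simp only [map_add, map_smul, inner_add_left, inner_add_right, real_inner_smul_left,
      real_inner_smul_right, hsymm] at this
    linarith
  have := discrim_le_zero hquad
  rw [discrim] at this
  linarith

theorem IsPositive.norm_sq_le_of_mul_eq_one {P R : E →L[ℝ] E} (hP : P.IsPositive)
    (hPR : P * R = 1) (y : E) : ‖y‖ ^ 2 ≤ ‖R‖ * ⟪P y, y⟫ := by
  have hPRy : P (R y) = y := by simpa using DFunLike.congr_fun hPR y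
  have hCS := hP.inner_sq_le (R y) y
  rw [hPRy, real_inner_self_eq_norm_sq, real_inner_comm] at hCS
  have hR := R.inner_apply_self_le_opNorm_mul_sq y
  rcases eq_or_ne y 0 with rfl | hy
  · simp
  have hy2 : 0 < ‖y‖ ^ 2 := by positivity
  nlinarith [hP.inner_nonneg_left y]

variable [CompleteSpace E]

theorem hasDerivAt_exp_smul_apply (A : E →L[ℝ] E) (x : E) (s : ℝ) :
    HasDerivAt (fun s : ℝ => exp (s • A) x) (A (exp (s • A) x)) s := by
  simpa using (hasDerivAt_exp_smul_const' A s).clm_apply (hasDerivAt_const s x)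

theorem inner_apply_add_inner_apply_eq_neg_sq_of_lyapunov {A P : E →L[ℝ] E}
    (hlyap : P * A + adjoint A * P = -1) (y : E) :
    ⟪P (A y), y⟫ + ⟪P y, A y⟫ = -‖y‖ ^ 2 := by
  have := congr(⟪$hlyap y, y⟫)
  simpa [inner_add_left, adjoint_inner_left, real_inner_self_eq_norm_sq] using this

theorem inner_exp_smul_apply_le_of_lyapunov {A P : E →L[ℝ] E}
    (hlyap : P * A + adjoint A * P = -1) (x : E) {t : ℝ} (ht : 0 ≤ t) :
    ⟪P (exp (t • A) x), exp (t • A) x⟫ ≤ ‖P‖ * ‖x‖ ^ 2 * Real.exp (-t / ‖P‖) := by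
  set u : ℝ → E := fun s => exp (s • A) x
  have hV : ∀ s, HasDerivAt (fun s => ⟪P (u s), u s⟫) (-‖u s‖ ^ 2) s := fun s => by
    have hu := hasDerivAt_exp_smul_apply A x s
    rw [← inner_apply_add_inner_apply_eq_neg_sq_of_lyapunov hlyap, add_comm]
    exact (P.hasFDerivAt.comp_hasDerivAt s hu).inner ℝ hu
  have hdecay : ∀ s, -‖u s‖ ^ 2 ≤ -‖P‖⁻¹ * ⟪P (u s), u s⟫ := fun s => by
    have hPinv : ‖P‖⁻¹ * ‖P‖ ≤ 1 := by
      rcases (norm_nonneg P).eq_or_lt with h | h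
      · simp [← h]
      · exact (inv_mul_le_one₀ h).2 le_rfl
    nlinarith [P.inner_apply_self_le_opNorm_mul_sq (u s), inv_nonneg.2 (norm_nonneg P),
      sq_nonneg ‖u s‖]
  have := le_mul_exp_of_hasDerivAt_le_mul hV hdecay ht
  calc ⟪P (u t), u t⟫ ≤ ⟪P (u 0), u 0⟫ * Real.exp (-‖P‖⁻¹ * t) := this
    _ ≤ ‖P‖ * ‖x‖ ^ 2 * Real.exp (-t / ‖P‖) := by
      rw [show -‖P‖⁻¹ * t = -t / ‖P‖ by ring]
      gcongr
      simpa [u] using P.inner_apply_self_le_opNorm_mul_sq x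

theorem norm_exp_smul_le_of_lyapunov {A P R : E →L[ℝ] E} (hP : P.IsPositive) (hPR : P * R = 1)
    (hlyap : P * A + adjoint A * P = -1) {t : ℝ} (ht : 0 ≤ t) :
    ‖exp (t • A)‖ ≤ √(‖R‖ * ‖P‖) * Real.exp (-t / (2 * ‖P‖)) := by
  refine opNorm_le_bound _ (by positivity) fun x => ?_
  have hexp : Real.exp (-t / ‖P‖) = Real.exp (-t / (2 * ‖P‖)) ^ 2 := by
    rw [← Real.exp_nat_mul]; ring_nf
  rw [← sq_le_sq₀ (norm_nonneg _) (by positivity), mul_pow, mul_pow,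
    Real.sq_sqrt (by positivity), ← hexp]
  calc ‖exp (t • A) x‖ ^ 2 ≤ ‖R‖ * ⟪P (exp (t • A) x), exp (t • A) x⟫ :=
        hP.norm_sq_le_of_mul_eq_one hPR _
    _ ≤ ‖R‖ * (‖P‖ * ‖x‖ ^ 2 * Real.exp (-t / ‖P‖)) := by
        gcongr; exact inner_exp_smul_apply_le_of_lyapunov hlyap x ht
    _ = _ := by ring

end ContinuousLinearMap

namespace Matrix

variable {ι : Type*} [Fintype ι] [DecidableEq ι]

theorem toEuclideanCLM_exp (A : Matrix ι ι ℝ) :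
    toEuclideanCLM (𝕜 := ℝ) (n := ι) (exp A) = exp (toEuclideanCLM (𝕜 := ℝ) (n := ι) A) :=
  -- `map_exp` wants a normed `ℚ`-algebra, which the L2 operator norm only provides via `ℝ`.
  letI : NormedAlgebra ℚ (Matrix ι ι ℝ) := NormedAlgebra.restrictScalars ℚ ℝ _
  NormedSpace.map_exp _ (AddMonoidHomClass.isometry_of_norm _ l2_opNorm_toEuclideanCLM).continuous A

open scoped ComplexOrder in
theorem PosSemidef.isPositive_toEuclideanCLM {𝕜 : Type*} [RCLike 𝕜] {X : Matrix ι ι 𝕜}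
    (hX : X.PosSemidef) : (toEuclideanCLM (𝕜 := 𝕜) (n := ι) X).IsPositive := by
  rwa [← ContinuousLinearMap.isPositive_toLinearMap_iff, coe_toEuclideanCLM_eq_toEuclideanLin,
    isPositive_toEuclideanLin_iff]

theorem toEuclideanCLM_mul_add_adjoint_mul_eq_neg_one {Q X : Matrix ι ι ℝ}
    (hlyap : X * Q + Qᵀ * X = -1) :
    toEuclideanCLM (𝕜 := ℝ) (n := ι) X * toEuclideanCLM (𝕜 := ℝ) (n := ι) Q
      + ContinuousLinearMap.adjoint (toEuclideanCLM (𝕜 := ℝ) (n := ι) Q)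
        * toEuclideanCLM (𝕜 := ℝ) (n := ι) X = -1 := by
  rw [← conjTranspose_eq_transpose_of_trivial, ← star_eq_conjTranspose] at hlyap
  simpa [map_star, ContinuousLinearMap.star_eq_adjoint] using
    congr(toEuclideanCLM (𝕜 := ℝ) (n := ι) $hlyap)

theorem norm_exp_smul_le_of_lyapunov {Q X : Matrix ι ι ℝ} (hX : X.PosDef)
    (hlyap : X * Q + Qᵀ * X = -1) {t : ℝ} (ht : 0 ≤ t) :
    ‖exp (t • Q)‖ ≤ √(‖X⁻¹‖ * ‖X‖) * Real.exp (-t / (2 * ‖X‖)) := by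
  have hXinv : toEuclideanCLM (𝕜 := ℝ) (n := ι) X * toEuclideanCLM (𝕜 := ℝ) (n := ι) X⁻¹ = 1 := by
    rw [← map_mul, mul_nonsing_inv X ((isUnit_iff_isUnit_det X).mp hX.isUnit), map_one]
  rw [cstar_norm_def, toEuclideanCLM_exp, map_smul]
  exact ContinuousLinearMap.norm_exp_smul_le_of_lyapunov
    (PosSemidef.isPositive_toEuclideanCLM hX.posSemidef) hXinv
    (toEuclideanCLM_mul_add_adjoint_mul_eq_neg_one hlyap) ht

end Matrix

theorem stmt_9_general (n : ℕ) (Q X : Matrix (Fin n) (Fin n) ℝ)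
    (hpd : X.PosDef)
    (hlyap : X * Q + Qᵀ * X = -(1 : Matrix (Fin n) (Fin n) ℝ)) :
    ∀ t : ℝ, 0 ≤ t →
      ‖NormedSpace.exp (t • Q)‖ ≤
        Real.sqrt (2 * ‖X⁻¹‖ * ‖X‖) * Real.exp (-t / (2 * ‖X‖)) := by
  intro t ht
  calc ‖NormedSpace.exp (t • Q)‖ ≤ √(‖X⁻¹‖ * ‖X‖) * Real.exp (-t / (2 * ‖X‖)) :=
        norm_exp_smul_le_of_lyapunov hpd hlyap ht
    _ ≤ √(2 * ‖X⁻¹‖ * ‖X‖) * Real.exp (-t / (2 * ‖X‖)) := by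
        gcongr
        linarith [norm_nonneg X⁻¹]

/-- Godunov's bound: if X is symmetric positive definite and solves the
Lyapunov equation XQ + QᵀX = −I, then ‖exp(tQ)‖ ≤ √(2‖X⁻¹‖‖X‖)·e^{−t/(2‖X‖)}
in the operator 2-norm. -/
theorem stmt_9 (n : ℕ) (Q X : Matrix (Fin n) (Fin n) ℝ)
    (hsymm : X.IsSymm) (hpd : X.PosDef)
    (hlyap : X * Q + Qᵀ * X = -(1 : Matrix (Fin n) (Fin n) ℝ)) :
    ∀ t : ℝ, 0 ≤ t →
      ‖NormedSpace.exp (t • Q)‖ ≤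
        Real.sqrt (2 * ‖X⁻¹‖ * ‖X‖) * Real.exp (-t / (2 * ‖X‖)) :=
  stmt_9_general n Q X hpd hlyap
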